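/- arXiv:2112.09549 — 5 statements merged into one kernel-verified Lean document; each statement's English description precedes it below -/
import Mathlib

section
/- Let s > 0, a > 0, D > 0, r > a, R₁ > a, R₂ > a, write P̄(s,x) = (a/(s·x))·exp(−(x−a)·√(s/D)), and set w₁ = s·P̄(s,R₁), w₂ = s·P̄(s,R₂). Suppose real numbers P₁, P₂, P₃, P₄ satisfy the UCA-4 renewal system P̄(s,r) − Pᵢ = w₁·(P_{i−1} + P_{i+1}) + w₂·P_{i+2} for every i (indices taken mod 4), and that the associated 4×4 matrix (with diagonal entries 1, entries w₁ between circularly adjacent indices and w₂ between opposite indices) is invertible. Then Pᵢ = P̄(s,r)/(1 + 2·w₁ + w₂) for every i. -/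
/-!
Every row of the UCA-4 matrix `A` is a permutation of `(1, w₁, w₂, w₁)`, so the constant vector
is an eigenvector of `A` with eigenvalue `1 + 2 w₁ + w₂`, while the renewal system says exactly that
`A P` is the constant vector `P̄(s,r)`. Since `A` is invertible the eigenvalue is nonzero and
`A P = P̄(s,r)` has the unique solution `P̄(s,r) / (1 + 2 w₁ + w₂)` in every coordinate.
-/

open Matrix

/-- Laplace transform of the single-FAR hitting probability:
`P̄(s,x) = (a/(s·x))·exp(−(x−a)·√(s/D))`. -/
noncomputable def Pbar (a D s x : ℝ) : ℝ :=
  a / (s * x) * Real.exp (-(x - a) * Real.sqrt (s / D))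

theorem Matrix.eq_const_of_mulVec_eq_const {n K : Type*} [Fintype n] [DecidableEq n] [Nonempty n]
    [Field K] {A : Matrix n n K} (hA : IsUnit A.det) {k c : K}
    (hone : A *ᵥ (fun _ => 1) = fun _ => k) {P : n → K} (hP : A *ᵥ P = fun _ => c) :
    P = fun _ => c / k := by
  have hinj : Function.Injective A.mulVec :=
    mulVec_injective_iff_isUnit.2 ((isUnit_iff_isUnit_det A).2 hA)
  have hk : k ≠ 0 := by
    rintro rfl
    have h : (fun _ => 1 : n → K) = 0 := hinj (hone.trans (mulVec_zero A).symm)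
    exact one_ne_zero (congrFun h (Classical.arbitrary n))
  apply hinj
  calc A *ᵥ P = (c / k) • fun _ => k := by rw [hP]; ext; simp [hk]
    _ = A *ᵥ fun _ => c / k := by rw [← hone, ← mulVec_smul]; congr 1; ext; simp

theorem ZMod.univ_four : (Finset.univ : Finset (ZMod 4)) = {0, 1, 2, 3} := by decide

def uca4 {R : Type*} [CommRing R] (w₁ w₂ : R) : Matrix (ZMod 4) (ZMod 4) R :=
  of fun i j => if i = j then 1 else if j = i + 1 ∨ j = i - 1 then w₁ else w₂

theorem uca4_mulVec {R : Type*} [CommRing R] (w₁ w₂ : R) (P : ZMod 4 → R) :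
    uca4 w₁ w₂ *ᵥ P = fun i => P i + w₁ * (P (i - 1) + P (i + 1)) + w₂ * P (i + 2) := by
  ext i
  simp only [uca4, mulVec, dotProduct, of_apply, ZMod.univ_four]
  rcases (by decide : ∀ i : ZMod 4, i = 0 ∨ i = 1 ∨ i = 2 ∨ i = 3) i with rfl | rfl | rfl | rfl <;>
    simp +decide <;> reduce_mod_char <;> ring

theorem stmt8_general (s a D r : ℝ)
    (w₁ w₂ : ℝ)
    (P : ZMod 4 → ℝ)
    (hP : ∀ i : ZMod 4, Pbar a D s r - P i = w₁ * (P (i - 1) + P (i + 1)) + w₂ * P (i + 2))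
    (A : Matrix (ZMod 4) (ZMod 4) ℝ)
    (hA : A = Matrix.of fun i j =>
      if i = j then 1 else if j = i + 1 ∨ j = i - 1 then w₁ else w₂)
    (hInv : IsUnit A.det) :
    ∀ i : ZMod 4, P i = Pbar a D s r / (1 + 2 * w₁ + w₂) := by
  have hA' : A = uca4 w₁ w₂ := hA
  subst hA'
  have hone : uca4 w₁ w₂ *ᵥ (fun _ => 1) = fun _ => 1 + 2 * w₁ + w₂ := by
    rw [uca4_mulVec]; ext; ring
  have hrenewal : uca4 w₁ w₂ *ᵥ P = fun _ => Pbar a D s r := by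
    rw [uca4_mulVec]; ext i; linarith [hP i]
  exact congrFun (eq_const_of_mulVec_eq_const hInv hone hrenewal)

/-- Theorem 4 for `N = 4` (equation l4rx): in a UCA of 4 FARs, the Laplace-domain
renewal system forces `Pᵢ = P̄(s,r)/(1 + 2w₁ + w₂)` for every `i`. -/
theorem stmt8 (s a D r R₁ R₂ : ℝ) (hs : 0 < s) (ha : 0 < a) (hD : 0 < D)
    (hr : a < r) (hR₁ : a < R₁) (hR₂ : a < R₂)
    (w₁ w₂ : ℝ) (hw₁ : w₁ = s * Pbar a D s R₁) (hw₂ : w₂ = s * Pbar a D s R₂)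
    (P : ZMod 4 → ℝ)
    (hP : ∀ i : ZMod 4, Pbar a D s r - P i = w₁ * (P (i - 1) + P (i + 1)) + w₂ * P (i + 2))
    (A : Matrix (ZMod 4) (ZMod 4) ℝ)
    (hA : A = Matrix.of fun i j =>
      if i = j then 1 else if j = i + 1 ∨ j = i - 1 then w₁ else w₂)
    (hInv : IsUnit A.det) :
    ∀ i : ZMod 4, P i = Pbar a D s r / (1 + 2 * w₁ + w₂) :=
  stmt8_general s a D r w₁ w₂ P hP A hA hInv
end

section
/- Let N ≥ 2, s > 0, a > 0, D > 0, r > a, write P̄(s,x) = (a/(s·x))·exp(−(x−a)·√(s/D)), and let ρ : {1, …, ⌊N/2⌋} → ℝ with ρ_m > a for all m. Index the FARs by i ∈ ZMod N and define the circular distance d(i,j) = min(|i−j| mod N, N − (|i−j| mod N)) for i ≠ j. Suppose P : ZMod N → ℝ satisfies P̄(s,r) − Pᵢ = s·∑_{j≠i} Pⱼ·P̄(s, ρ_{d(i,j)}) for every i, and that the N×N matrix A with A_{ii} = 1 and A_{ij} = s·P̄(s, ρ_{d(j,i)}) for i ≠ j is invertible. Then for every i, Pᵢ = P̄(s,r)/(1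 + s·∑_{m=1}^{N−1} P̄(s, ρ_{min(m, N−m)})); equivalently, Pᵢ = P̄(s,r)/(1 + ∑_{m=1}^{δ} 2·s·P̄(s,ρ_m)) when N is odd and Pᵢ = P̄(s,r)/(1 + ∑_{m=1}^{δ−1} 2·s·P̄(s,ρ_m) + s·P̄(s,ρ_δ)) when N is even, where δ = ⌈(N−1)/2⌉. -/
open Matrix

/-- Circular index distance on `ZMod N`. -/
def circDist (N : ℕ) [NeZero N] (i j : ZMod N) : ℕ :=
  min (i - j).val (N - (i - j).val)

/-!
The matrix `A` of the renewal system is symmetric under the rotations of `ZMod N`, so every row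
has the same off-diagonal sum `s·∑_{m=1}^{N-1} P̄(s, ρ_{min(m, N-m)})` and the constant vector is
an eigenvector of `A` with eigenvalue `1 + s·∑ …`. The system says `A P = P̄(s,r)·𝟙`; since `A` is
invertible that eigenvalue is nonzero and the unique solution is the constant vector
`P̄(s,r)/(1 + s·∑ …)`. Folding the sum at `m ↦ N - m` gives the odd and even forms.
-/

open Finset

namespace Matrix

variable {n K : Type*} [Fintype n] [DecidableEq n] [Field K]

theorem eq_const_of_mulVec_eq_const_s9 {A : Matrix n n K} (hA : IsUnit A.det) {v : n → K} {c μ : K}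
    (hv : A *ᵥ v = fun _ => c) (hμ : A *ᵥ (fun _ => 1) = fun _ => μ) :
    v = fun _ => c / μ := by
  have hinj := mulVec_injective_of_isUnit ((isUnit_iff_isUnit_det A).mpr hA)
  funext i
  have hμ0 : μ ≠ 0 := by
    rintro rfl
    exact one_ne_zero (congrFun (hinj (hμ.trans (mulVec_zero A).symm)) i)
  have hconst : A *ᵥ (fun _ => c / μ) = fun _ => c := by
    rw [show (fun _ => c / μ : n → K) = (c / μ) • fun _ => 1 by ext; simp, mulVec_smul, hμ]
    ext; simp [hμ0]
  exact congrFun (hinj (hv.trans hconst.symm)) i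

end Matrix

section CircDist

variable {N : ℕ} [NeZero N]

theorem circDist_comm (i j : ZMod N) : circDist N i j = circDist N j i := by
  rcases eq_or_ne i j with rfl | hij
  · rfl
  have hsub : i - j ≠ 0 := sub_ne_zero.mpr hij
  have hval : (i - j).val ≠ 0 := (ZMod.val_ne_zero _).mpr hsub
  have hlt : (i - j).val < N := ZMod.val_lt _
  unfold circDist
  rw [← neg_sub i j, ZMod.neg_val, if_neg hsub]
  omega

theorem sum_filter_ne_circDist {M : Type*} [AddCommMonoid M] (i : ZMod N) (F : ℕ → M) :
    ∑ j ∈ univ.filter (fun j => j ≠ i), F (circDist N j i)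
      = ∑ m ∈ Icc 1 (N - 1), F (min m (N - m)) := by
  refine sum_nbij' (fun j => (j - i).val) (fun m => i + m) (fun j hj => ?_) (fun m hm => ?_)
    (fun j _ => ?_) (fun m hm => ?_) (fun j _ => rfl)
  · have hval : (j - i).val ≠ 0 := (ZMod.val_ne_zero _).mpr (sub_ne_zero.mpr (mem_filter.mp hj).2)
    have hlt : (j - i).val < N := ZMod.val_lt _
    rw [mem_Icc]
    omega
  · rw [mem_Icc] at hm
    simp only [mem_filter, mem_univ, true_and, ne_eq, add_eq_left, ZMod.natCast_eq_zero_iff]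
    exact Nat.not_dvd_of_pos_of_lt (by omega) (by omega)
  · simp
  · rw [mem_Icc] at hm
    simp only [add_sub_cancel_left]
    exact ZMod.val_cast_of_lt (by omega)

end CircDist

section FoldedSum

variable {R : Type*} [CommSemiring R] (f : ℕ → R)

theorem sum_Icc_min_sub (N : ℕ) :
    ∑ m ∈ Icc 1 (N - 1), f (min m (N - m))
      = ∑ m ∈ Icc 1 (N / 2), f m + ∑ m ∈ Icc 1 ((N - 1) / 2), f m := by
  have hIcc (k : ℕ) : Icc 1 k = Ioc 0 k := Icc_add_one_left_eq_Ioc 0 k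
  simp only [hIcc]
  rw [← sum_Ioc_consecutive _ (Nat.zero_le (N / 2)) (by omega : N / 2 ≤ N - 1)]
  congr 1
  · exact sum_congr rfl fun m hm => by rw [mem_Ioc] at hm; congr 1; omega
  · refine sum_nbij' (fun m => N - m) (fun m => N - m) ?_ ?_ ?_ ?_ ?_ <;>
      intro m hm <;> simp only [mem_Ioc] at hm ⊢
    all_goals first | omega | congr 1; omega

theorem sum_Icc_min_sub_of_odd {N : ℕ} (hN : Odd N) :
    ∑ m ∈ Icc 1 (N - 1), f (min m (N - m)) = ∑ m ∈ Icc 1 (N / 2), 2 * f m := by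
  have hhalf : (N - 1) / 2 = N / 2 := by obtain ⟨k, rfl⟩ := hN; omega
  rw [sum_Icc_min_sub, hhalf, ← sum_add_distrib]
  exact sum_congr rfl fun m _ => (two_mul _).symm

theorem sum_Icc_min_sub_of_even {N : ℕ} (hN : Even N) (hN0 : N ≠ 0) :
    ∑ m ∈ Icc 1 (N - 1), f (min m (N - m))
      = ∑ m ∈ Icc 1 (N / 2 - 1), 2 * f m + f (N / 2) := by
  have hhalf : N / 2 = (N - 1) / 2 + 1 := by obtain ⟨k, rfl⟩ := hN; omega
  rw [sum_Icc_min_sub, hhalf, sum_Icc_succ_top (by omega), Nat.add_sub_cancel, add_right_comm,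
    ← sum_add_distrib]
  exact congrArg (· + f _) (sum_congr rfl fun m _ => (two_mul _).symm)

end FoldedSum

section UCAMatrix

variable {R : Type*} [CommRing R] (N : ℕ) [NeZero N] (s : R) (g : ℕ → R)

def ucaMatrix : Matrix (ZMod N) (ZMod N) R :=
  of fun i j => if i = j then 1 else s * g (circDist N j i)

theorem ucaMatrix_mulVec_apply (v : ZMod N → R) (i : ZMod N) :
    (ucaMatrix N s g *ᵥ v) i
      = v i + s * ∑ j ∈ univ.filter (fun j => j ≠ i), v j * g (circDist N j i) := by
  rw [mulVec, dotProduct, ← add_sum_erase _ _ (mem_univ i), filter_ne', mul_sum]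
  simp only [ucaMatrix, of_apply, if_pos, one_mul]
  congr 1
  refine sum_congr rfl fun j hj => ?_
  rw [if_neg (ne_of_mem_erase hj).symm]
  ring

theorem ucaMatrix_mulVec_const (x : R) :
    ucaMatrix N s g *ᵥ (fun _ => x)
      = fun _ => x * (1 + s * ∑ m ∈ Icc 1 (N - 1), g (min m (N - m))) := by
  ext i
  rw [ucaMatrix_mulVec_apply, ← mul_sum, sum_filter_ne_circDist]
  ring

end UCAMatrix

theorem stmt9_general (N : ℕ) [NeZero N] (s a D r : ℝ) (ρ : ℕ → ℝ) (P : ZMod N → ℝ)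
    (hP : ∀ i, Pbar a D s r - P i =
      s * ∑ j ∈ Finset.univ.filter (fun j => j ≠ i), P j * Pbar a D s (ρ (circDist N i j)))
    (A : Matrix (ZMod N) (ZMod N) ℝ)
    (hA : A = Matrix.of fun i j =>
      if i = j then 1 else s * Pbar a D s (ρ (circDist N j i)))
    (hInv : IsUnit A.det) :
    (∀ i, P i = Pbar a D s r /
        (1 + s * ∑ m ∈ Finset.Icc 1 (N - 1), Pbar a D s (ρ (min m (N - m))))) ∧
    (Odd N → ∀ i, P i = Pbar a D s r /
        (1 + ∑ m ∈ Finset.Icc 1 (N / 2), 2 * s * Pbar a D s (ρ m))) ∧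
    (Even N → ∀ i, P i = Pbar a D s r /
        (1 + ∑ m ∈ Finset.Icc 1 (N / 2 - 1), 2 * s * Pbar a D s (ρ m) +
          s * Pbar a D s (ρ (N / 2)))) := by
  set g : ℕ → ℝ := fun m => Pbar a D s (ρ m)
  replace hA : A = ucaMatrix N s g := hA
  have hsystem : A *ᵥ P = fun _ => Pbar a D s r := by
    ext i
    have hrow := hP i
    simp_rw [circDist_comm i] at hrow
    rw [hA, ucaMatrix_mulVec_apply]
    linarith
  have hconst : A *ᵥ (fun _ => 1) = fun _ => 1 + s * ∑ m ∈ Icc 1 (N - 1), g (min m (N - m)) := by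
    rw [hA, ucaMatrix_mulVec_const, one_mul]
  have hsolution := eq_const_of_mulVec_eq_const_s9 hInv hsystem hconst
  refine ⟨fun i => congrFun hsolution i, fun hN i => ?_, fun hN i => ?_⟩
  · rw [congrFun hsolution i, sum_Icc_min_sub_of_odd g hN, mul_sum]
    simp only [g, ← mul_assoc, mul_comm s 2]
  · rw [congrFun hsolution i, sum_Icc_min_sub_of_even g hN (NeZero.ne N), mul_add, mul_sum]
    simp only [g, ← mul_assoc, mul_comm s 2, add_assoc]

/-- Conjecture 1 (Laplace domain, equations lNrxodd/lNrxeven): in a UCA of `N`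
FARs, the renewal system forces every `Pᵢ` to equal
`P̄(s,r)/(1 + s·∑_{m=1}^{N−1} P̄(s,ρ_{min(m,N−m)}))`, which splits into the
odd/even forms with `δ = ⌈(N−1)/2⌉`. -/
theorem stmt9 (N : ℕ) [NeZero N] (hN : 2 ≤ N) (s a D r : ℝ)
    (hs : 0 < s) (ha : 0 < a) (hD : 0 < D) (hr : a < r)
    (ρ : ℕ → ℝ) (hρ : ∀ m, 1 ≤ m → m ≤ N / 2 → a < ρ m)
    (P : ZMod N → ℝ)
    (hP : ∀ i, Pbar a D s r - P i =
      s * ∑ j ∈ Finset.univ.filter (fun j => j ≠ i), P j * Pbar a D s (ρ (circDist N i j)))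
    (A : Matrix (ZMod N) (ZMod N) ℝ)
    (hA : A = Matrix.of fun i j =>
      if i = j then 1 else s * Pbar a D s (ρ (circDist N j i)))
    (hInv : IsUnit A.det) :
    (∀ i, P i = Pbar a D s r /
        (1 + s * ∑ m ∈ Finset.Icc 1 (N - 1), Pbar a D s (ρ (min m (N - m))))) ∧
    (Odd N → ∀ i, P i = Pbar a D s r /
        (1 + ∑ m ∈ Finset.Icc 1 (N / 2), 2 * s * Pbar a D s (ρ m))) ∧
    (Even N → ∀ i, P i = Pbar a D s r /
        (1 + ∑ m ∈ Finset.Icc 1 (N / 2 - 1), 2 * s * Pbar a D s (ρ m) +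
          s * Pbar a D s (ρ (N / 2)))) :=
  stmt9_general N s a D r ρ P hP A hA hInv
end

section
/- Let s > 0, D > 0, 0 < a < r, R₁ > a, R₂ > a satisfy 2a/R₁ + a/R₂ < 1, and write P̄(s,x) = (a/(s·x))·exp(−(x−a)·√(s/D)). Then the double series ∑_{n=0}^{∞} (−1)ⁿ·(aⁿ⁺¹/r)·∑_{k=0}^{n} C(n,k)·(2ᵏ/(R₁ᵏ·R₂ⁿ⁻ᵏ))·(1/s)·exp(−(r − a + k·(R₁ − a) + (n−k)·(R₂ − a))·√(s/D)) converges absolutely and its sum equals P̄(s,r)/(1 + 2·s·P̄(s,R₁) + s·P̄(s,R₂)). -/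
open Real Finset

section Pbar

variable {a D s : ℝ}

lemma mul_Pbar (hs : s ≠ 0) (x : ℝ) :
    s * Pbar a D s x = a / x * exp (-(x - a) * √(s / D)) := by
  rw [Pbar]
  field_simp

lemma Pbar_nonneg (hs : 0 ≤ s) (ha : 0 ≤ a) {x : ℝ} (hx : 0 ≤ x) : 0 ≤ Pbar a D s x := by
  unfold Pbar
  positivity

lemma mul_Pbar_le (hs : 0 < s) (ha : 0 ≤ a) {x : ℝ} (hax : a ≤ x) : s * Pbar a D s x ≤ a / x := by
  rw [mul_Pbar hs.ne']
  refine mul_le_of_le_one_right (div_nonneg ha (ha.trans hax)) (exp_le_one_iff.2 ?_)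
  nlinarith [sqrt_nonneg (s / D)]

lemma uca4_term_eq (hs : s ≠ 0) (r R₁ R₂ : ℝ) (n : ℕ) :
    (-1 : ℝ) ^ n * (a ^ (n + 1) / r) *
        ∑ k ∈ range (n + 1), (n.choose k : ℝ) *
          (2 ^ k / (R₁ ^ k * R₂ ^ (n - k))) * (1 / s) *
          exp (-(r - a + k * (R₁ - a) + (n - k : ℕ) * (R₂ - a)) * √(s / D)) =
      Pbar a D s r * (-(2 * (s * Pbar a D s R₁) + s * Pbar a D s R₂)) ^ n := by
  set q := √(s / D)
  set x₁ := 2 / R₁ * exp (-(R₁ - a) * q)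
  set x₂ := 1 / R₂ * exp (-(R₂ - a) * q)
  have hw : -(2 * (s * Pbar a D s R₁) + s * Pbar a D s R₂) = -a * (x₁ + x₂) := by
    rw [mul_Pbar hs, mul_Pbar hs]
    ring
  have hbinomial : ∑ k ∈ range (n + 1), (n.choose k : ℝ) *
        (2 ^ k / (R₁ ^ k * R₂ ^ (n - k))) * (1 / s) *
        exp (-(r - a + k * (R₁ - a) + (n - k : ℕ) * (R₂ - a)) * q) =
      1 / s * exp (-(r - a) * q) * (x₁ + x₂) ^ n := by
    rw [add_pow, mul_sum]
    refine sum_congr rfl fun k _ => ?_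
    have hexp : -(r - a + k * (R₁ - a) + (n - k : ℕ) * (R₂ - a)) * q =
        -(r - a) * q + k * (-(R₁ - a) * q) + (n - k : ℕ) * (-(R₂ - a) * q) := by ring
    rw [hexp, exp_add, exp_add, exp_nat_mul, exp_nat_mul, mul_pow, mul_pow, div_pow, div_pow]
    field_simp
    ring
  rw [hbinomial, hw, mul_pow, Pbar]
  ring

end Pbar

theorem stmt10_general (s D a r R₁ R₂ : ℝ) (hs : 0 < s)
    (ha : 0 < a) (hR₁ : a < R₁) (hR₂ : a < R₂)
    (hsmall : 2 * a / R₁ + a / R₂ < 1) :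
    Summable (fun n : ℕ =>
      |(-1 : ℝ) ^ n * (a ^ (n + 1) / r) *
        ∑ k ∈ Finset.range (n + 1), (n.choose k : ℝ) *
          (2 ^ k / (R₁ ^ k * R₂ ^ (n - k))) * (1 / s) *
          Real.exp (-(r - a + k * (R₁ - a) + (n - k : ℕ) * (R₂ - a)) *
            Real.sqrt (s / D))|) ∧
    (∑' n : ℕ, (-1 : ℝ) ^ n * (a ^ (n + 1) / r) *
        ∑ k ∈ Finset.range (n + 1), (n.choose k : ℝ) *
          (2 ^ k / (R₁ ^ k * R₂ ^ (n - k))) * (1 / s) *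
          Real.exp (-(r - a + k * (R₁ - a) + (n - k : ℕ) * (R₂ - a)) *
            Real.sqrt (s / D))) =
      Pbar a D s r / (1 + 2 * (s * Pbar a D s R₁) + s * Pbar a D s R₂) := by
  set w := 2 * (s * Pbar a D s R₁) + s * Pbar a D s R₂
  have hw_nonneg : 0 ≤ w := by
    have := Pbar_nonneg (D := D) hs.le ha.le (ha.trans hR₁).le
    have := Pbar_nonneg (D := D) hs.le ha.le (ha.trans hR₂).le
    positivity
  have hw_lt_one : w < 1 := by
    have h₁ := mul_Pbar_le (D := D) hs ha.le hR₁.le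
    have h₂ := mul_Pbar_le (D := D) hs ha.le hR₂.le
    rw [mul_div_assoc] at hsmall
    linarith
  have hw : |-w| < 1 := by rwa [abs_neg, abs_of_nonneg hw_nonneg]
  simp only [uca4_term_eq hs.ne']
  refine ⟨((summable_geometric_of_abs_lt_one hw).mul_left _).abs, ?_⟩
  rw [tsum_mul_left, tsum_geometric_of_abs_lt_one hw, sub_neg_eq_add, div_eq_mul_inv, add_assoc]

/-- Laplace-domain binomial-series expansion of the UCA-4 hitting probability
(equation UCA4 of Theorem 4). -/
theorem stmt10 (s D a r R₁ R₂ : ℝ) (hs : 0 < s) (hD : 0 < D)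
    (ha : 0 < a) (har : a < r) (hR₁ : a < R₁) (hR₂ : a < R₂)
    (hsmall : 2 * a / R₁ + a / R₂ < 1) :
    Summable (fun n : ℕ =>
      |(-1 : ℝ) ^ n * (a ^ (n + 1) / r) *
        ∑ k ∈ Finset.range (n + 1), (n.choose k : ℝ) *
          (2 ^ k / (R₁ ^ k * R₂ ^ (n - k))) * (1 / s) *
          Real.exp (-(r - a + k * (R₁ - a) + (n - k : ℕ) * (R₂ - a)) *
            Real.sqrt (s / D))|) ∧
    (∑' n : ℕ, (-1 : ℝ) ^ n * (a ^ (n + 1) / r) *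
        ∑ k ∈ Finset.range (n + 1), (n.choose k : ℝ) *
          (2 ^ k / (R₁ ^ k * R₂ ^ (n - k))) * (1 / s) *
          Real.exp (-(r - a + k * (R₁ - a) + (n - k : ℕ) * (R₂ - a)) *
            Real.sqrt (s / D))) =
      Pbar a D s r / (1 + 2 * (s * Pbar a D s R₁) + s * Pbar a D s R₂) :=
  stmt10_general s D a r R₁ R₂ hs ha hR₁ hR₂ hsmall
end

section
/- Let s > 0, D > 0, 0 < a < r and R > a, write P̄(s,x) = (a/(s·x))·exp(−(x−a)·√(s/D)), and set u = P̄(s,r), w = s·P̄(s,R). Then (u/(1 + 2w)) / (1 + w/(1 + 2w)) = u/(1 + 3w). Moreover, if R > 3a, then u/(1 + 3w) = ∑_{n=0}^{∞} (a/r)·((−3a)ⁿ/(s·Rⁿ))·exp(−(r − a + n·(R − a))·√(s/D)), the series converging absolutely. -/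
/-- Corollary 2 (Laplace domain, regular tetrahedron of 4 FARs): with
`u = P̄(s,r)` and `w = s·P̄(s,R)`, one has
`(u/(1+2w))/(1 + w/(1+2w)) = u/(1+3w)`, and for `R > 3a` the geometric-series
expansion of `u/(1+3w)` converges absolutely. -/
theorem stmt13 (s D a r R : ℝ) (hs : 0 < s) (hD : 0 < D)
    (ha : 0 < a) (har : a < r) (hR : a < R) :
    (Pbar a D s r / (1 + 2 * (s * Pbar a D s R))) /
        (1 + s * Pbar a D s R / (1 + 2 * (s * Pbar a D s R))) =
      Pbar a D s r / (1 + 3 * (s * Pbar a D s R)) ∧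
    (3 * a < R →
      Summable (fun n : ℕ =>
        |a / r * ((-3 * a) ^ n / (s * R ^ n)) *
          Real.exp (-(r - a + n * (R - a)) * Real.sqrt (s / D))|) ∧
      Pbar a D s r / (1 + 3 * (s * Pbar a D s R)) =
        ∑' n : ℕ, a / r * ((-3 * a) ^ n / (s * R ^ n)) *
          Real.exp (-(r - a + n * (R - a)) * Real.sqrt (s / D))) := by
  set E := Real.sqrt (s / D) with hE
  have hr : 0 < r := ha.trans har
  have hRpos : 0 < R := ha.trans hR
  have hw : s * Pbar a D s R = a / R * Real.exp (-(R - a) * E) := by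
    unfold Pbar
    rw [hE, Real.sqrt_div hs.le]
    field_simp
  set w : ℝ := a / R * Real.exp (-(R - a) * E) with hwdef
  have hwpos : 0 < w := by positivity
  have h12 : (0:ℝ) < 1 + 2 * w := by linarith
  have h13 : (0:ℝ) < 1 + 3 * w := by linarith
  constructor
  · rw [hw]
    rw [div_div]
    congr 1
    field_simp
    ring
  · intro h3
    have hwlt : 3 * w < 1 := by
      have hexp : Real.exp (-(R - a) * E) ≤ 1 := by
        apply Real.exp_le_one_iff.mpr
        have hE0 : 0 ≤ E := Real.sqrt_nonneg _
        nlinarith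
      have : w ≤ a / R := by
        calc w = a / R * Real.exp (-(R - a) * E) := rfl
        _ ≤ a / R * 1 := by
            apply mul_le_mul_of_nonneg_left hexp (by positivity)
        _ = a / R := by ring
      have h1 : 3 * (a / R) < 1 := by
        rw [mul_div_assoc']
        exact (div_lt_one hRpos).mpr h3
      linarith
    have hq : |(-(3 * w))| < 1 := by
      rw [abs_neg, abs_of_pos (by positivity)]
      linarith
    set u : ℝ := Pbar a D s r with hudef
    have hterm : ∀ n : ℕ,
        a / r * ((-3 * a) ^ n / (s * R ^ n)) *
          Real.exp (-(r - a + n * (R - a)) * E) = u * (-(3 * w)) ^ n := by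
      intro n
      have hexp : Real.exp (-(r - a + n * (R - a)) * E)
          = Real.exp (-(r - a) * E) * Real.exp (-(R - a) * E) ^ n := by
        rw [← Real.exp_nat_mul, ← Real.exp_add]
        ring_nf
      have e1 : (-3 * a) ^ n = (-1 : ℝ) ^ n * (3 ^ n * a ^ n) := by
        rw [show (-3 * a : ℝ) = (-1) * (3 * a) by ring, mul_pow, mul_pow]
      have e2 : (-(3 * w)) ^ n = (-1 : ℝ) ^ n * (3 ^ n * w ^ n) := by
        rw [show (-(3 * w) : ℝ) = (-1) * (3 * w) by ring, mul_pow, mul_pow]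
      rw [hexp, e1, e2, hwdef, mul_pow, div_pow, hudef]
      unfold Pbar
      rw [← hE]
      field_simp
    have hgs : Summable (fun n : ℕ => (-(3 * w)) ^ n) :=
      summable_geometric_of_abs_lt_one hq
    constructor
    · have : Summable (fun n : ℕ => |u * (-(3 * w)) ^ n|) := by
        simpa [abs_mul] using (hgs.abs.mul_left |u|)
      refine this.congr fun n => ?_
      rw [hterm n]
    · have hsum : ∑' n : ℕ, (-(3 * w)) ^ n = (1 - (-(3 * w)))⁻¹ :=
        tsum_geometric_of_abs_lt_one hq
      calc u / (1 + 3 * (s * Pbar a D s R)) = u * (1 - (-(3 * w)))⁻¹ := by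
            rw [hw]; rw [div_eq_mul_inv]; ring_nf
      _ = u * ∑' n : ℕ, (-(3 * w)) ^ n := by rw [hsum]
      _ = ∑' n : ℕ, u * (-(3 * w)) ^ n := hgs.tsum_mul_left u |>.symm
      _ = _ := by
            refine tsum_congr fun n => (hterm n).symm
end

section
/- Let 0 < a < r, R > a, D > 0 and t > 0, and define erfc(x) = (2/√π)·∫_{x}^{∞} exp(−u²) du and cₙ = (a/R)ⁿ·erfc((r − a + n·(R − a))/√(4·D·t)). Then the alternating series ∑_{n=0}^{∞} (−1)ⁿ·cₙ is absolutely summable and its sum S satisfies 0 ≤ S ≤ erfc((r − a)/√(4·D·t)). Consequently the symmetric 2-FAR hitting probability p₁(t) = (a/r)·S satisfies p₁(t) ≤ p̄(t,r) = (a/r)·erfc((r − a)/√(4·D·t)), and the array gain g(t) = 2·p₁(t)/p̄(t,r) satisfies g(t) ≤ 2. -/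
/-!
Since `a < R`, the terms `cₙ = (a/R)ⁿ · erfc((r − a + n(R − a))/√(4Dt))` are dominated by a
geometric series and decrease in `n` (both factors are nonnegative and decreasing, `erfc`
being antitone). An alternating series with decreasing terms lies between its partial sums of
even and odd length, here `0` and `c₀ = erfc((r − a)/√(4Dt))`.
-/

/-- The complementary error function `erfc(x) = (2/√π)·∫_{x}^{∞} exp(−u²) du`. -/
noncomputable def erfc (x : ℝ) : ℝ :=
  2 / Real.sqrt Real.pi * ∫ u in Set.Ioi x, Real.exp (-u ^ 2)

lemma erfc_nonneg (x : ℝ) : 0 ≤ erfc x :=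
  mul_nonneg (by positivity) <|
    MeasureTheory.setIntegral_nonneg measurableSet_Ioi fun _ _ => (Real.exp_pos _).le

lemma erfc_antitone : Antitone erfc := by
  intro x y hxy
  refine mul_le_mul_of_nonneg_left (MeasureTheory.setIntegral_mono_set ?_ ?_ ?_) (by positivity)
  · simpa using (integrable_exp_neg_mul_sq one_pos).integrableOn
  · exact .of_forall fun _ => (Real.exp_pos _).le
  · exact .of_forall fun _ hu => hxy.trans_lt hu

theorem Antitone.alternating_tsum_mem_Icc {c : ℕ → ℝ} (hc : Antitone c) (hs : Summable c) :
    Summable (fun n => |(-1 : ℝ) ^ n * c n|) ∧ ∑' n, (-1 : ℝ) ^ n * c n ∈ Set.Icc 0 (c 0) := by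
  have hc_nonneg : ∀ n, 0 ≤ c n := hc.le_of_tendsto hs.tendsto_atTop_zero
  have habs : Summable (fun n => |(-1 : ℝ) ^ n * c n|) := by
    simpa [abs_mul, abs_of_nonneg (hc_nonneg _)] using hs
  have hlim := habs.of_abs.hasSum.tendsto_sum_nat
  refine ⟨habs, ?_, ?_⟩
  · simpa using hc.alternating_series_le_tendsto hlim 0
  · simpa using hc.tendsto_le_alternating_series hlim 0

lemma antitone_erfc_div {b d s : ℝ} (hd : 0 ≤ d) (hs : 0 ≤ s) :
    Antitone (fun n : ℕ => erfc ((b + n * d) / s)) := fun _ _ hmn =>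
  erfc_antitone (div_le_div_of_nonneg_right (by gcongr) hs)

section

variable {a R b s : ℝ}

lemma antitone_pow_mul_erfc (ha : 0 ≤ a) (hR : a < R) (hs : 0 ≤ s) :
    Antitone (fun n : ℕ => (a / R) ^ n * erfc ((b + n * (R - a)) / s)) := fun _ _ hmn =>
  mul_le_mul (pow_right_anti₀ (div_nonneg ha (ha.trans_lt hR).le)
      ((div_le_one (ha.trans_lt hR)).mpr hR.le) hmn)
    (antitone_erfc_div (sub_nonneg.mpr hR.le) hs hmn) (erfc_nonneg _)
    (pow_nonneg (div_nonneg ha (ha.trans_lt hR).le) _)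

lemma summable_pow_mul_erfc (ha : 0 ≤ a) (hR : a < R) (hs : 0 ≤ s) :
    Summable (fun n : ℕ => (a / R) ^ n * erfc ((b + n * (R - a)) / s)) := by
  have hx0 : 0 ≤ a / R := div_nonneg ha (ha.trans_lt hR).le
  have hx1 : a / R < 1 := (div_lt_one (ha.trans_lt hR)).mpr hR
  refine Summable.of_nonneg_of_le (fun n => mul_nonneg (pow_nonneg hx0 n) (erfc_nonneg _))
    (fun n => ?_) ((summable_geometric_of_lt_one hx0 hx1).mul_right (erfc (b / s)))
  have he := antitone_erfc_div (b := b) (sub_nonneg.mpr hR.le) hs (Nat.zero_le n)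
  simp only [Nat.cast_zero, zero_mul, add_zero] at he
  exact mul_le_mul_of_nonneg_left he (pow_nonneg hx0 n)

end

theorem stmt16_general (a r R D t : ℝ) (ha : 0 < a) (har : a < r) (hR : a < R) :
    Summable (fun n : ℕ =>
      |(-1 : ℝ) ^ n * ((a / R) ^ n *
        erfc ((r - a + n * (R - a)) / Real.sqrt (4 * D * t)))|) ∧
    0 ≤ (∑' n : ℕ, (-1 : ℝ) ^ n * ((a / R) ^ n *
        erfc ((r - a + n * (R - a)) / Real.sqrt (4 * D * t)))) ∧
    (∑' n : ℕ, (-1 : ℝ) ^ n * ((a / R) ^ n *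
        erfc ((r - a + n * (R - a)) / Real.sqrt (4 * D * t)))) ≤
      erfc ((r - a) / Real.sqrt (4 * D * t)) ∧
    a / r * (∑' n : ℕ, (-1 : ℝ) ^ n * ((a / R) ^ n *
        erfc ((r - a + n * (R - a)) / Real.sqrt (4 * D * t)))) ≤
      a / r * erfc ((r - a) / Real.sqrt (4 * D * t)) ∧
    2 * (a / r * (∑' n : ℕ, (-1 : ℝ) ^ n * ((a / R) ^ n *
        erfc ((r - a + n * (R - a)) / Real.sqrt (4 * D * t))))) /
      (a / r * erfc ((r - a) / Real.sqrt (4 * D * t))) ≤ 2 := by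
  have hs := Real.sqrt_nonneg (4 * D * t)
  have hratio : 0 ≤ a / r := div_nonneg ha.le (ha.trans har).le
  obtain ⟨habs, hS_nonneg, hS_le⟩ :=
    (antitone_pow_mul_erfc (b := r - a) ha.le hR hs).alternating_tsum_mem_Icc
      (summable_pow_mul_erfc ha.le hR hs)
  simp only [pow_zero, one_mul, Nat.cast_zero, zero_mul, add_zero] at hS_le
  have hp_le := mul_le_mul_of_nonneg_left hS_le hratio
  refine ⟨habs, hS_nonneg, hS_le, hp_le, ?_⟩
  exact div_le_of_le_mul₀ (mul_nonneg hratio (erfc_nonneg _)) zero_le_two (by linarith)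

/-- The symmetric 2-FAR hitting probability (equation UCA2) is a nonnegative
alternating series never exceeding the single-FAR hitting probability, so the
array gain `g(t) = 2·p₁(t)/p̄(t,r)` is at most `2`. -/
theorem stmt16 (a r R D t : ℝ) (ha : 0 < a) (har : a < r) (hR : a < R)
    (hD : 0 < D) (ht : 0 < t) :
    Summable (fun n : ℕ =>
      |(-1 : ℝ) ^ n * ((a / R) ^ n *
        erfc ((r - a + n * (R - a)) / Real.sqrt (4 * D * t)))|) ∧
    0 ≤ (∑' n : ℕ, (-1 : ℝ) ^ n * ((a / R) ^ n *
        erfc ((r - a + n * (R - a)) / Real.sqrt (4 * D * t)))) ∧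
    (∑' n : ℕ, (-1 : ℝ) ^ n * ((a / R) ^ n *
        erfc ((r - a + n * (R - a)) / Real.sqrt (4 * D * t)))) ≤
      erfc ((r - a) / Real.sqrt (4 * D * t)) ∧
    a / r * (∑' n : ℕ, (-1 : ℝ) ^ n * ((a / R) ^ n *
        erfc ((r - a + n * (R - a)) / Real.sqrt (4 * D * t)))) ≤
      a / r * erfc ((r - a) / Real.sqrt (4 * D * t)) ∧
    2 * (a / r * (∑' n : ℕ, (-1 : ℝ) ^ n * ((a / R) ^ n *
        erfc ((r - a + n * (R - a)) / Real.sqrt (4 * D * t))))) /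
      (a / r * erfc ((r - a) / Real.sqrt (4 * D * t))) ≤ 2 :=
  stmt16_general a r R D t ha har hR
end
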